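/- Let φ_j : [−ω_j, ω_j] → ℝ, j = 1,…,N, be functions with φ_j'' = 0 on (−ω_j, ω_j) (hence affine: φ_j(ω) = α_j ω + β_j). Suppose they satisfy the nonlocal conditions φ_j((−1)^σ ω_j) − ∑_{k,s} b_{jσks} φ_k((−1)^σ ω_j + ω_{jσks}) = 1 for σ = 1, 2, where b_{jσks} ≥ 0, ∑_{k,s} b_{jσks} ≤ 1 for each (j,σ), |(−1)^σ ω_j + ω_{jσks}| < ω_k, and min over all j, σ of (1 − ∑_{k,s} b_{jσks}) attained with strict inequality for at least one σ per j. If such a solution exists and is the unique solution, then φ_j(ω) > 0 for all ω ∈ [−ω_j, ω_j] and all j. -/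
import Mathlib


open Real

/-- Sign `(−1)^σ` for `σ ∈ {1,2}` (encoded as `Fin 2`, with `0 ↦ −1`, `1 ↦ 1`). -/
noncomputable def sgn2 (σ : Fin 2) : ℝ := if σ = 0 then -1 else 1

lemma affine_ge_min {a c lo hi x : ℝ} (hx : x ∈ Set.Icc lo hi) :
    min (a * lo + c) (a * hi + c) ≤ a * x + c := by
  obtain ⟨h1, h2⟩ := hx
  rcases le_or_gt 0 a with ha | ha
  · exact le_trans (min_le_left _ _) (by nlinarith)
  · exact le_trans (min_le_right _ _) (by nlinarith)

/-- Positivity of the solution of the model one-dimensional nonlocal problem (32)–(33):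
affine functions `φ_j(ω) = α_j ω + β_j` on `[−ω_j, ω_j]` satisfying the nonlocal
conditions with nonnegative coefficients `b_{jσks}`, row sums at most 1 and strictly less
than 1 for at least one `σ` for each `j`, which form the unique such solution, are
strictly positive on `[−ω_j, ω_j]`. -/
theorem stmt4 (N : ℕ) (om : Fin N → ℝ) (hom : ∀ j, 0 < om j ∧ om j < π)
    (S : Fin N → Fin 2 → Fin N → ℕ)
    (b : (j : Fin N) → (σ : Fin 2) → (k : Fin N) → Fin (S j σ k) → ℝ)
    (w : (j : Fin N) → (σ : Fin 2) → (k : Fin N) → Fin (S j σ k) → ℝ)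
    (hb : ∀ j σ k s, 0 ≤ b j σ k s)
    (hrow : ∀ j σ, (∑ k, ∑ s, b j σ k s) ≤ 1)
    (hstrict : ∀ j, ∃ σ, (∑ k, ∑ s, b j σ k s) < 1)
    (hw : ∀ j σ k s, |sgn2 σ * om j + w j σ k s| < om k)
    (α β : Fin N → ℝ) (φ : Fin N → ℝ → ℝ)
    (hφ : ∀ j x, φ j x = α j * x + β j)
    (hnonloc : ∀ j σ,
      φ j (sgn2 σ * om j)
        - ∑ k, ∑ s, b j σ k s * φ k (sgn2 σ * om j + w j σ k s) = 1)
    (huniq : ∀ α' β' : Fin N → ℝ,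
      (∀ j σ,
        (α' j * (sgn2 σ * om j) + β' j)
          - ∑ k, ∑ s, b j σ k s *
              (α' k * (sgn2 σ * om j + w j σ k s) + β' k) = 1) →
      α' = α ∧ β' = β) :
    ∀ j, ∀ x ∈ Set.Icc (-(om j)) (om j), 0 < φ j x := by
  intro j x hx
  set F : Fin N × Fin 2 → ℝ := fun p => φ p.1 (sgn2 p.2 * om p.1) with hF
  obtain ⟨p₀, -, hp₀⟩ := Finset.exists_min_image Finset.univ F ⟨(j, 0), Finset.mem_univ _⟩
  set m := F p₀ with hm
  -- the minimum bounds φ_k everywhere on [-om k, om k]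
  have key : ∀ k : Fin N, ∀ y ∈ Set.Icc (-(om k)) (om k), m ≤ φ k y := by
    intro k y hy
    have h0 : F (k, (0 : Fin 2)) = α k * (-(om k)) + β k := by
      simp [hF, sgn2, hφ]
    have h1 : F (k, (1 : Fin 2)) = α k * (om k) + β k := by
      simp [hF, sgn2, hφ]
    have hmin := affine_ge_min (a := α k) (c := β k) hy
    rw [hφ]
    calc m ≤ min (F (k, 0)) (F (k, 1)) :=
          le_min (hp₀ _ (Finset.mem_univ _)) (hp₀ _ (Finset.mem_univ _))
      _ ≤ α k * y + β k := by rw [h0, h1]; exact hmin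
  obtain ⟨j₀, σ₀⟩ := p₀
  have hn := hnonloc j₀ σ₀
  have hsum : (∑ k, ∑ s, b j₀ σ₀ k s) * m
      ≤ ∑ k, ∑ s, b j₀ σ₀ k s * φ k (sgn2 σ₀ * om j₀ + w j₀ σ₀ k s) := by
    rw [Finset.sum_mul]
    refine Finset.sum_le_sum fun k _ => ?_
    rw [Finset.sum_mul]
    refine Finset.sum_le_sum fun s _ => ?_
    refine mul_le_mul_of_nonneg_left ?_ (hb j₀ σ₀ k s)
    refine key k _ ?_
    have := hw j₀ σ₀ k s
    rw [abs_lt] at this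
    exact ⟨le_of_lt this.1, le_of_lt this.2⟩
  have hmpos : 0 < m := by
    by_contra h
    push_neg at h
    have hr := hrow j₀ σ₀
    have hmF : m = F (j₀, σ₀) := rfl
    have : (1 : ℝ) ≤ m * (1 - ∑ k, ∑ s, b j₀ σ₀ k s) := by
      have : (1 : ℝ) ≤ m - (∑ k, ∑ s, b j₀ σ₀ k s) * m := by
        rw [← hn]
        have : F (j₀, σ₀) = φ j₀ (sgn2 σ₀ * om j₀) := rfl
        linarith [hsum]
      linarith [this]
    nlinarith
  calc (0 : ℝ) < m := hmpos
    _ ≤ φ j x := key j x hx
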